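/- Let L = (L_k) and L̃ = (L̃_k), with polarised forms B_k and B̃_k, be two formal functionals from C^∞(ℝ^n) to C^∞(ℝ^m) which are both non-linear homomorphisms and which coincide up to order k−1 for some k ≥ 2. Then they have the same support map K_0, and their order-k components differ by a functional of the form T_k(∂g): for every g ∈ C^∞(ℝ^n) and x ∈ ℝ^m, L̃_k(g)(x) − L_k(g)(x) = T^{a_1…a_k}(x) · ∂_{a_1}g(K_0(x)) ⋯ ∂_{a_k}g(K_0(x)), where the symmetric tensor T is given by T^{a_1…a_k}(x) = B̃_k(y^{a_1},…,y^{a_k})(x) − B_k(y^{a_1},…,y^{a_k})(x), with y^a the coordinate functions on ℝ^n. -/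
import Mathlib


open scoped BigOperators

namespace ThickMorphism

/-- Real-valued functions on `ℝ^n` (the ambient space of `C^∞(ℝ^n)`). -/
abbrev Fn (n : ℕ) : Type := (Fin n → ℝ) → ℝ

/-- `ℝ^n`-valued functions on `ℝ^m`. -/
abbrev VFn (m n : ℕ) : Type := (Fin m → ℝ) → Fin n → ℝ

/-- `f` is a smooth (`C^∞`) function on `ℝ^n`. -/
def Sm {n : ℕ} (f : Fn n) : Prop := ContDiff ℝ (⊤ : ℕ∞) f

/-- `f` is a smooth (`C^∞`) map from `ℝ^m` to `ℝ^n`. -/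
def SmV {m n : ℕ} (f : VFn m n) : Prop := ContDiff ℝ (⊤ : ℕ∞) f

/-- The partial derivative `∂_b g`. -/
noncomputable def pd {n : ℕ} (b : Fin n) (g : Fn n) : Fn n :=
  fun y => fderiv ℝ g y (Pi.single b 1)

/-- The `a`-th coordinate function `y^a` on `ℝ^n`. -/
def coordFn {n : ℕ} (a : Fin n) : Fn n := fun y => y a

/-- Ordered tuples of `j` positive parts summing to `k` (parts coded in `Fin (k+1)`). -/
def parts (j k : ℕ) : Finset (Fin j → Fin (k + 1)) :=
  Finset.univ.filter fun t => (∑ i, (t i : ℕ)) = k ∧ ∀ i, 0 < (t i : ℕ)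

/-- Order-`k` component of the Taylor expansion (at `Y 0`) of `h ∘ Y`,
where `Y r` is the order-`r` component of a formal map with values in `ℝ^n`:
`Σ_{j} Σ_{r_1+⋯+r_j = k, r_i ≥ 1} (1/j!) ∂^j h (Y 0 x) (Y_{r_1}(x),…,Y_{r_j}(x))`. -/
noncomputable def taylorComp {m n : ℕ} (h : Fn n) (Y : ℕ → VFn m n) (k : ℕ) : Fn m :=
  fun x => ∑ j ∈ Finset.range (k + 1), ∑ t ∈ parts j k,
    ((Nat.factorial j : ℝ))⁻¹ * iteratedFDeriv ℝ j h (Y 0 x) (fun i => Y (t i : ℕ) x)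

/-- A formal functional from `C^∞(ℝ^n)` to `C^∞(ℝ^m)`: a sequence of symmetric
`k`-linear maps `B k` (the polarised forms), preserving smoothness; the order-`k`
component of the functional is the diagonal restriction `g ↦ B k (g,…,g)`. -/
structure FormalFunctional (n m : ℕ) where
  B : (k : ℕ) → MultilinearMap ℝ (fun _ : Fin k => Fn n) (Fn m)
  symm : ∀ (k : ℕ) (σ : Equiv.Perm (Fin k)) (v : Fin k → Fn n), B k (v ∘ σ) = B k v
  smooth : ∀ (k : ℕ) (v : Fin k → Fn n), (∀ i, Sm (v i)) → Sm (B k v)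

/-- The order-`k` component `L_k(g)` of a formal functional. -/
def FormalFunctional.ord {n m : ℕ} (L : FormalFunctional n m) (k : ℕ) (g : Fn n) : Fn m :=
  L.B k (fun _ => g)

/-- A formal map over `C^∞(ℝ^n)` with values in `ℝ^n`-valued functions on `ℝ^m`:
a sequence of symmetric `r`-linear maps `K r`; the order-`r` component at `g`
is the diagonal restriction. -/
structure FormalMap (n m : ℕ) where
  K : (r : ℕ) → MultilinearMap ℝ (fun _ : Fin r => Fn n) (VFn m n)
  symm : ∀ (r : ℕ) (σ : Equiv.Perm (Fin r)) (v : Fin r → Fn n), K r (v ∘ σ) = K r v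
  smooth : ∀ (r : ℕ) (v : Fin r → Fn n), (∀ i, Sm (v i)) → SmV (K r v)

/-- The order-`r` component `K_r(g)` of a formal map. -/
def FormalMap.ord {n m : ℕ} (K : FormalMap n m) (r : ℕ) (g : Fn n) : VFn m n :=
  K.K r (fun _ => g)

/-- The support map `K₀` of a formal map. -/
def FormalMap.supp {n m : ℕ} (K : FormalMap n m) : VFn m n :=
  K.K 0 (fun i => i.elim0)

/-- `L` is a non-linear homomorphism with associated formal map `K`: for all smooth
`g, h` and all `k`, the order-`k`-in-`g` component of the differential of `L` at `g`
in direction `h`, namely `(k+1)·B_{k+1}(h,g,…,g)`, equals the order-`k` component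
of the formal (Taylor) composition `h(K(g))`. -/
def IsNonlinearHomWith {n m : ℕ} (L : FormalFunctional n m) (K : FormalMap n m) : Prop :=
  ∀ (g h : Fn n), Sm g → Sm h → ∀ k : ℕ,
    ((k : ℝ) + 1) • L.B (k + 1) (Fin.cons h (fun _ => g)) =
      taylorComp h (fun r => K.ord r g) k

/-- `L` is a non-linear homomorphism. -/
def IsNonlinearHom {n m : ℕ} (L : FormalFunctional n m) : Prop :=
  ∃ K : FormalMap n m, IsNonlinearHomWith L K

/-- A generating function `S(x,q) = Σ_k S_k^{a_1…a_k}(x) q_{a_1}⋯q_{a_k}` of a thick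
morphism `ℝ^m ⇛ ℝ^n`: smooth symmetric tensors `S k x : (Fin k → Fin n) → ℝ`. -/
structure GenFn (m n : ℕ) where
  S : (k : ℕ) → (Fin m → ℝ) → (Fin k → Fin n) → ℝ
  symm : ∀ (k : ℕ) (σ : Equiv.Perm (Fin k)) (x : Fin m → ℝ) (a : Fin k → Fin n),
    S k x (a ∘ σ) = S k x a
  smooth : ∀ (k : ℕ) (a : Fin k → Fin n), Sm (fun x => S k x a)

/-- The first-order coefficient `S_1` of a generating function, as a map `ℝ^m → ℝ^n`. -/
def sOne {m n : ℕ} (S : GenFn m n) : VFn m n := fun x a => S.S 1 x (fun _ => a)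

/-- Order-`t`-in-`g` component (`t ≥ 1`) of `q_b = (∂_b g)(y(x,g))`, the formal map `y`
having components `Y`: it is the Taylor-composition component of order `t-1`. -/
noncomputable def qComp {m n : ℕ} (g : Fn n) (Y : ℕ → VFn m n) (b : Fin n) (t : ℕ) : Fn m :=
  taylorComp (pd b g) Y (t - 1)

/-- Order-`N`-in-`g` component of `∂S(x,q)/∂q_a` evaluated at `q_b = (∂_b g)(y(x,g))`,
where `y` has components `Y`. -/
noncomputable def dSComp {m n : ℕ} (S : GenFn m n) (g : Fn n) (Y : ℕ → VFn m n) (N : ℕ) :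
    VFn m n :=
  fun x a => ∑ j ∈ Finset.range (N + 1), ∑ b : Fin j → Fin n, ∑ t ∈ parts j N,
    ((j : ℝ) + 1) * S.S (j + 1) x (Fin.cons a b) * ∏ i, qComp g Y (b i) (t i : ℕ) x

/-- Auxiliary recursion: `thickYAux S g k r` is the order-`r` component `y_r(x,g)` of the
formal map of the thick morphism `Φ_S` for `r ≤ k` (and `0` for `r > k`). -/
noncomputable def thickYAux {m n : ℕ} (S : GenFn m n) (g : Fn n) : ℕ → ℕ → VFn m n
  | 0 => fun r => if r = 0 then (fun x a => S.S 1 x (fun _ => a)) else 0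
  | k + 1 => fun r =>
      if r = k + 1 then dSComp S g (thickYAux S g k) (k + 1) else thickYAux S g k r

/-- The order-`k` component `y_k(x,g)` of the formal map of the thick morphism `Φ_S`:
`y_0 = S_1`, and `y_{k+1}` is the order-`(k+1)`-in-`g` component of `∂S/∂q_a` at
`q = (∂g)(y_{≤k}(x,g))`. -/
noncomputable def thickY {m n : ℕ} (S : GenFn m n) (g : Fn n) (k : ℕ) : VFn m n :=
  thickYAux S g k k

/-- Order-`k`-in-`g` component of `S(x,q)` evaluated at `q = (∂g)(y(x,g))`. -/
noncomputable def SqComp {m n : ℕ} (S : GenFn m n) (g : Fn n) (k : ℕ) : Fn m :=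
  fun x => ∑ j ∈ Finset.range (k + 1), ∑ b : Fin j → Fin n, ∑ t ∈ parts j k,
    S.S j x b * ∏ i, qComp g (thickY S g) (b i) (t i : ℕ) x

/-- Order-`k`-in-`g` component of `y^a q_a` at `y = y(x,g)`, `q = (∂g)(y(x,g))`. -/
noncomputable def yqComp {m n : ℕ} (S : GenFn m n) (g : Fn n) (k : ℕ) : Fn m :=
  fun x => ∑ a : Fin n, ∑ t ∈ Finset.Icc 1 k,
    thickY S g (k - t) x a * qComp g (thickY S g) a t x

/-- The order-`k`-in-`g` component of the thick-morphism pull-back `Φ_S^*(g)`, i.e. of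
`g(y) + S(x,q) − y^a q_a` at `y = y(x,g)`, `q = (∂g)(y(x,g))`, all compositions being
expanded by Taylor series at `y_0 = S_1(x)`. -/
noncomputable def thickPull {m n : ℕ} (S : GenFn m n) (g : Fn n) (k : ℕ) : Fn m :=
  fun x =>
    (if k = 0 then 0 else taylorComp g (thickY S g) (k - 1) x)
      + SqComp S g k x - yqComp S g k x

/-- The coordinate functions are smooth. -/
lemma coordFn_smooth {n : ℕ} (a : Fin n) : Sm (coordFn a) :=
  (ContinuousLinearMap.proj a : (Fin n → ℝ) →L[ℝ] ℝ).contDiff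

/-- The generating function `S_L` associated with a formal functional `L`:
`S_k^{a_1…a_k}(x) = B_k(y^{a_1},…,y^{a_k})(x)`, the polarised forms of `L`
evaluated on the coordinate functions of `ℝ^n`. -/
noncomputable def assocGen {n m : ℕ} (L : FormalFunctional n m) : GenFn m n where
  S := fun k x a => L.B k (fun i => coordFn (a i)) x
  symm := by
    intro k σ x a
    have h := L.symm k σ (fun i => coordFn (a i))
    exact congrFun h x
  smooth := fun k a => L.smooth k _ (fun i => coordFn_smooth (a i))

/-- Truncation of a generating function to degree `≤ k` in `q`. -/
noncomputable def truncGen {m n : ℕ} (S : GenFn m n) (k : ℕ) : GenFn m n where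
  S := fun i x a => if i ≤ k then S.S i x a else 0
  symm := by
    intro i σ x a
    by_cases h : i ≤ k <;> simp [h, S.symm]
  smooth := by
    intro i a
    by_cases h : i ≤ k
    · simpa [Sm, h] using S.smooth i a
    · simpa [Sm, h] using (contDiff_const : ContDiff ℝ (⊤ : ℕ∞) fun _ : Fin m → ℝ => (0 : ℝ))


section AuxLemmas

variable {n m : ℕ}

lemma fderiv_coordFn (a : Fin n) (y : Fin n → ℝ) :
    fderiv ℝ (coordFn a) y
      = (ContinuousLinearMap.proj a : (Fin n → ℝ) →L[ℝ] ℝ) :=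
  (ContinuousLinearMap.proj a : (Fin n → ℝ) →L[ℝ] ℝ).fderiv

lemma fderiv_coordFn_apply (a : Fin n) (y w : Fin n → ℝ) :
    fderiv ℝ (coordFn a) y w = w a := by rw [fderiv_coordFn]; rfl

lemma iteratedFDeriv_coordFn_ss (a : Fin n) (j : ℕ) (y : Fin n → ℝ)
    (v : Fin (j + 2) → (Fin n → ℝ)) :
    iteratedFDeriv ℝ (j + 2) (coordFn a) y v = 0 := by
  rw [iteratedFDeriv_succ_apply_right]
  have h1 : (fun z => fderiv ℝ (coordFn a) z)
      = fun _ : Fin n → ℝ => (ContinuousLinearMap.proj a : (Fin n → ℝ) →L[ℝ] ℝ) :=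
    funext fun z => fderiv_coordFn a z
  rw [h1, iteratedFDeriv_const_of_ne (Nat.succ_ne_zero j)]
  simp

lemma fderiv_eval_eq_sum_pd (h : Fn n) (y w : Fin n → ℝ) :
    fderiv ℝ h y w = ∑ a, w a * pd a h y := by
  conv_lhs => rw [← Finset.univ_sum_single w, map_sum]
  refine Finset.sum_congr rfl fun a _ => ?_
  have h2 : (Pi.single a (w a) : (Fin n → ℝ)) = w a • (Pi.single a (1 : ℝ) : (Fin n → ℝ)) := by
    funext b
    by_cases hb : b = a <;> simp [Pi.single_apply, hb]
  rw [h2, map_smul]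
  simp [pd, smul_eq_mul]

lemma mem_parts {j N : ℕ} {t : Fin j → Fin (N + 1)} :
    t ∈ parts j N ↔ (∑ i, (t i : ℕ)) = N ∧ ∀ i, 0 < (t i : ℕ) := by
  simp [parts]

lemma parts_zero_left {N : ℕ} (hN : N ≠ 0) : parts 0 N = ∅ := by
  ext t
  simp only [parts, Finset.mem_filter, Finset.mem_univ, true_and, Finset.notMem_empty,
    iff_false, not_and]
  intro hs
  simp at hs
  omega

lemma parts_one {N : ℕ} (hN : 1 ≤ N) :
    parts 1 N = {fun _ => (⟨N, Nat.lt_succ_self N⟩ : Fin (N + 1))} := by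
  ext t
  simp only [parts, Finset.mem_filter, Finset.mem_univ, true_and, Finset.mem_singleton]
  constructor
  · rintro ⟨hs, -⟩
    funext i
    have hi : i = 0 := Subsingleton.elim _ _
    subst hi
    rw [Fin.sum_univ_one] at hs
    exact Fin.ext hs
  · rintro rfl
    refine ⟨by simp, fun i => by simp; omega⟩

lemma parts_bound {j N : ℕ} (hj : j ≠ 1) {t : Fin j → Fin (N + 1)}
    (ht : t ∈ parts j N) (i : Fin j) : (t i : ℕ) < N := by
  obtain ⟨hs, hp⟩ := mem_parts.1 ht
  have hj2 : 2 ≤ j := by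
    rcases Nat.lt_or_ge j 2 with hlt | hge
    · interval_cases j
      · exact i.elim0
      · exact absurd rfl hj
    · exact hge
  set i' : Fin j := if h0 : (i : ℕ) = 0 then ⟨1, by omega⟩ else ⟨0, by omega⟩ with hi'
  have hne : i' ≠ i := by
    by_cases h0 : (i : ℕ) = 0
    · simp only [hi', dif_pos h0]
      exact fun hcon => by have := congrArg Fin.val hcon; simp [h0] at this
    · simp only [hi', dif_neg h0]
      exact fun hcon => by have := congrArg Fin.val hcon; simp at this; omega
  have hle : ∑ x ∈ ({i', i} : Finset (Fin j)), (t x : ℕ) ≤ ∑ i'', (t i'' : ℕ) :=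
    Finset.sum_le_sum_of_subset (Finset.subset_univ _)
  rw [Finset.sum_pair hne] at hle
  have := hp i'
  omega

lemma taylorComp_zero (h : Fn n) (Y : ℕ → VFn m n) (x : Fin m → ℝ) :
    taylorComp h Y 0 x = h (Y 0 x) := by
  unfold taylorComp
  rw [Finset.sum_range_one]
  have hp : parts 0 0 = (Finset.univ : Finset (Fin 0 → Fin 1)) := by
    ext t; simp [parts]
  rw [hp, Finset.univ_unique, Finset.sum_singleton]
  simp [iteratedFDeriv_zero_apply]

lemma taylorComp_coordFn (a : Fin n) (Y : ℕ → VFn m n) {N : ℕ} (hN : 1 ≤ N)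
    (x : Fin m → ℝ) :
    taylorComp (coordFn a) Y N x = Y N x a := by
  unfold taylorComp
  rw [Finset.sum_eq_single_of_mem 1 (Finset.mem_range.2 (by omega))]
  · rw [parts_one hN, Finset.sum_singleton]
    simp [iteratedFDeriv_one_apply, fderiv_coordFn_apply]
  · intro j hj hjne
    match j, hjne with
    | 0, _ => rw [parts_zero_left (by omega)]; simp
    | 1, hjne => exact absurd rfl hjne
    | (j' + 2), _ =>
      refine Finset.sum_eq_zero fun t ht => ?_
      rw [iteratedFDeriv_coordFn_ss, mul_zero]

lemma taylorComp_sub (h : Fn n) (Y Z : ℕ → VFn m n) {N : ℕ} (hN : 1 ≤ N)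
    (h0 : Y 0 = Z 0) (hlow : ∀ r, 1 ≤ r → r < N → Y r = Z r) (x : Fin m → ℝ) :
    taylorComp h Z N x - taylorComp h Y N x
      = fderiv ℝ h (Y 0 x) (fun a => Z N x a - Y N x a) := by
  unfold taylorComp
  rw [← Finset.sum_sub_distrib]
  rw [Finset.sum_eq_single_of_mem 1 (Finset.mem_range.2 (by omega))]
  · rw [parts_one hN, Finset.sum_singleton, Finset.sum_singleton]
    have hZY : (fun aa => Z N x aa - Y N x aa) = Z N x - Y N x := rfl
    rw [hZY]
    simp only [iteratedFDeriv_one_apply, Nat.factorial_one, Nat.cast_one, inv_one,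
      one_mul, ← h0]
    rw [← (fderiv ℝ h (Y 0 x)).map_sub]
  · intro j hj hjne
    rw [sub_eq_zero]
    refine Finset.sum_congr rfl fun t ht => ?_
    have hbd := parts_bound hjne ht
    have hpos := (mem_parts.1 ht).2
    have harg : (fun i => Z ((t i : ℕ)) x) = fun i => Y ((t i : ℕ)) x := by
      funext i
      rw [hlow _ (hpos i) (hbd i)]
    rw [harg, ← h0]

end AuxLemmas

section Polarization

variable {n m : ℕ} {p : ℕ}

lemma sum_neg_one_pow_supersets {α : Type*} [Fintype α] [DecidableEq α] (R : Finset α) :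
    (∑ S ∈ Finset.univ.filter (fun S : Finset α => R ⊆ S),
        (-1 : ℝ) ^ (Fintype.card α - S.card))
      = if R = Finset.univ then 1 else 0 := by
  have hbij : (∑ S ∈ Finset.univ.filter (fun S : Finset α => R ⊆ S),
      (-1 : ℝ) ^ (Fintype.card α - S.card))
      = ∑ T ∈ Rᶜ.powerset, (-1 : ℝ) ^ T.card := by
    refine Finset.sum_nbij' (fun S => Sᶜ) (fun T => Tᶜ) ?_ ?_ ?_ ?_ ?_
    · intro S hS
      rw [Finset.mem_filter] at hS
      rw [Finset.mem_powerset]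
      exact Finset.compl_subset_compl.2 hS.2
    · intro T hT
      rw [Finset.mem_powerset] at hT
      rw [Finset.mem_filter]
      refine ⟨Finset.mem_univ _, ?_⟩
      simpa using Finset.compl_subset_compl.2 hT
    · intro S _; simp
    · intro T _; simp
    · intro S _
      rw [Finset.card_compl]
  rw [hbij]
  have hint : ∑ T ∈ Rᶜ.powerset, (-1 : ℝ) ^ T.card
      = ((∑ T ∈ Rᶜ.powerset, (-1 : ℤ) ^ T.card : ℤ) : ℝ) := by
    push_cast
    rfl
  rw [hint, Finset.sum_powerset_neg_one_pow_card]
  by_cases h : R = Finset.univ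
  · simp [h]
  · have : Rᶜ ≠ ∅ := fun hc => h ((Finset.compl_eq_empty_iff R).1 hc)
    simp [h, this]

lemma polar_formula (f : MultilinearMap ℝ (fun _ : Fin p => Fn n) (Fn m))
    (hf : ∀ (σ : Equiv.Perm (Fin p)) (v : Fin p → Fn n), f (v ∘ σ) = f v)
    (v : Fin p → Fn n) :
    (p.factorial : ℝ) • f v
      = ∑ S : Finset (Fin p), (-1 : ℝ) ^ (p - S.card) • f (fun _ => ∑ i ∈ S, v i) := by
  classical
  have step1 : ∑ S : Finset (Fin p), (-1 : ℝ) ^ (p - S.card) • f (fun _ => ∑ i ∈ S, v i)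
      = ∑ S : Finset (Fin p), ∑ r ∈ Fintype.piFinset (fun _ : Fin p => S),
          (-1 : ℝ) ^ (p - S.card) • f (fun i => v (r i)) := by
    refine Finset.sum_congr rfl fun S _ => ?_
    rw [f.map_sum_finset (fun _ j => v j) (fun _ => S), Finset.smul_sum]
  rw [step1]
  have step2 : ∑ S : Finset (Fin p), ∑ r ∈ Fintype.piFinset (fun _ : Fin p => S),
          (-1 : ℝ) ^ (p - S.card) • f (fun i => v (r i))
      = ∑ r : Fin p → Fin p, ∑ S ∈ Finset.univ.filter
          (fun S : Finset (Fin p) => Finset.image r Finset.univ ⊆ S),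
          (-1 : ℝ) ^ (p - S.card) • f (fun i => v (r i)) := by
    refine Finset.sum_comm' ?_
    intro S r
    simp only [Finset.mem_univ, true_and, Fintype.mem_piFinset, Finset.mem_filter, and_true]
    rw [Finset.image_subset_iff]
    simp
  rw [step2]
  have step3 : ∀ r : Fin p → Fin p,
      (∑ S ∈ Finset.univ.filter
          (fun S : Finset (Fin p) => Finset.image r Finset.univ ⊆ S),
          (-1 : ℝ) ^ (p - S.card) • f (fun i => v (r i)))
      = (if Finset.image r Finset.univ = Finset.univ then (1:ℝ) else 0) • f (fun i => v (r i)) := by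
    intro r
    rw [← Finset.sum_smul]
    congr 1
    have := sum_neg_one_pow_supersets (Finset.image r Finset.univ)
    rwa [Fintype.card_fin] at this
  rw [Finset.sum_congr rfl fun r _ => step3 r]
  have step4 : ∑ r : Fin p → Fin p,
      (if Finset.image r Finset.univ = Finset.univ then (1:ℝ) else 0) • f (fun i => v (r i))
      = ∑ r ∈ Finset.univ.filter
          (fun r : Fin p → Fin p => Finset.image r Finset.univ = Finset.univ),
          f (fun i => v (r i)) := by
    rw [Finset.sum_filter]
    refine Finset.sum_congr rfl fun r _ => ?_
    by_cases h : Finset.image r Finset.univ = Finset.univ <;> simp [h]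
  rw [step4]
  have hsurj : ∀ r : Fin p → Fin p,
      Finset.image r Finset.univ = Finset.univ ↔ Function.Bijective r := by
    intro r
    rw [← Finite.surjective_iff_bijective]
    constructor
    · intro h b
      have : b ∈ Finset.image r Finset.univ := by rw [h]; exact Finset.mem_univ b
      obtain ⟨a, _, ha⟩ := Finset.mem_image.1 this
      exact ⟨a, ha⟩
    · intro h
      refine Finset.eq_univ_iff_forall.2 fun b => ?_
      obtain ⟨a, ha⟩ := h b
      exact Finset.mem_image.2 ⟨a, Finset.mem_univ a, ha⟩
  have step5 : ∑ r ∈ Finset.univ.filter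
          (fun r : Fin p → Fin p => Finset.image r Finset.univ = Finset.univ),
          f (fun i => v (r i))
      = ∑ σ : Equiv.Perm (Fin p), f (fun i => v (σ i)) := by
    refine Finset.sum_nbij'
      (fun r => if h : Function.Bijective r then Equiv.ofBijective r h else Equiv.refl _)
      (fun σ => ⇑σ) ?_ ?_ ?_ ?_ ?_
    · intro r _; exact Finset.mem_univ _
    · intro σ _
      rw [Finset.mem_filter]
      exact ⟨Finset.mem_univ _, (hsurj _).2 σ.bijective⟩
    · intro r hr
      rw [Finset.mem_filter] at hr
      have hb := (hsurj r).1 hr.2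
      rw [dif_pos hb]
      rfl
    · intro σ _
      have hb : Function.Bijective ⇑σ := σ.bijective
      rw [dif_pos hb]
      ext x
      simp [Equiv.ofBijective]
    · intro r hr
      rw [Finset.mem_filter] at hr
      have hb := (hsurj r).1 hr.2
      rw [dif_pos hb]
      rfl
  rw [step5]
  have step6 : ∀ σ : Equiv.Perm (Fin p), f (fun i => v (σ i)) = f v := fun σ => hf σ v
  rw [Finset.sum_congr rfl fun σ _ => step6 σ, Finset.sum_const, Finset.card_univ,
    Fintype.card_perm, Fintype.card_fin, ← Nat.cast_smul_eq_nsmul ℝ]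

lemma polar_zero (f : MultilinearMap ℝ (fun _ : Fin p => Fn n) (Fn m))
    (hf : ∀ (σ : Equiv.Perm (Fin p)) (v : Fin p → Fn n), f (v ∘ σ) = f v)
    (h0 : ∀ g : Fn n, Sm g → f (fun _ => g) = 0)
    (v : Fin p → Fn n) (hv : ∀ i, Sm (v i)) : f v = 0 := by
  have hform := polar_formula f hf v
  have hz : ∀ S : Finset (Fin p), f (fun _ => ∑ i ∈ S, v i) = 0 := by
    intro S
    apply h0
    have hfun : (∑ i ∈ S, v i) = fun y => ∑ i ∈ S, v i y := by
      funext y; simp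
    rw [hfun]
    exact ContDiff.sum fun i _ => hv i
  rw [Finset.sum_congr rfl fun S _ => by rw [hz S, smul_zero]] at hform
  rw [Finset.sum_const, smul_zero] at hform
  have hne : (p.factorial : ℝ) ≠ 0 := Nat.cast_ne_zero.2 p.factorial_ne_zero
  have := congrArg (fun z => (p.factorial : ℝ)⁻¹ • z) hform
  simpa [smul_smul, inv_mul_cancel₀ hne] using this

lemma polar_eq (f g : MultilinearMap ℝ (fun _ : Fin p => Fn n) (Fn m))
    (hf : ∀ (σ : Equiv.Perm (Fin p)) (v : Fin p → Fn n), f (v ∘ σ) = f v)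
    (hg : ∀ (σ : Equiv.Perm (Fin p)) (v : Fin p → Fn n), g (v ∘ σ) = g v)
    (h : ∀ gg : Fn n, Sm gg → f (fun _ => gg) = g (fun _ => gg))
    (v : Fin p → Fn n) (hv : ∀ i, Sm (v i)) : f v = g v := by
  have := polar_zero (f - g)
    (by intro σ w; simp only [MultilinearMap.sub_apply]; rw [hf, hg])
    (by intro gg hgg; simp only [MultilinearMap.sub_apply]; rw [h gg hgg, sub_self])
    v hv
  rw [MultilinearMap.sub_apply, sub_eq_zero] at this
  exact this

end Polarization

section Peel

variable {n m p : ℕ}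

/-- Extend a permutation of `Fin p` to `Fin (p+1)` fixing `0`. -/
def permCons (σ : Equiv.Perm (Fin p)) : Equiv.Perm (Fin (p + 1)) where
  toFun := Fin.cons 0 (Fin.succ ∘ ⇑σ)
  invFun := Fin.cons 0 (Fin.succ ∘ ⇑σ.symm)
  left_inv i := by
    refine Fin.cases ?_ (fun j => ?_) i <;> simp
  right_inv i := by
    refine Fin.cases ?_ (fun j => ?_) i <;> simp

lemma cons_comp_permCons (σ : Equiv.Perm (Fin p)) (u : Fn n) (v : Fin p → Fn n) :
    (Fin.cons u v : Fin (p + 1) → Fn n) ∘ ⇑(permCons σ) = Fin.cons u (v ∘ ⇑σ) := by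
  funext i
  refine Fin.cases ?_ (fun j => ?_) i
  · simp [permCons]
  · simp [permCons]

lemma smooth_cons {h : Fn n} {v : Fin p → Fn n} (hh : Sm h) (hv : ∀ i, Sm (v i)) :
    ∀ i, Sm ((Fin.cons h v : Fin (p + 1) → Fn n) i) := by
  intro i
  refine Fin.cases ?_ (fun j => ?_) i
  · simpa using hh
  · simpa using hv j

/-- Peel the first slot: off-diagonal version of the differential identity. -/
lemma peel (D : MultilinearMap ℝ (fun _ : Fin (p + 1) => Fn n) (Fn m))
    (hD : ∀ (σ : Equiv.Perm (Fin (p + 1))) (v : Fin (p + 1) → Fn n), D (v ∘ ⇑σ) = D v)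
    (K0 : VFn m n)
    (hdiag : ∀ g h : Fn n, Sm g → Sm h → ∀ x,
      D (Fin.cons h (fun _ => g)) x
        = ∑ b, pd b h (K0 x) * D (Fin.cons (coordFn b) (fun _ => g)) x)
    (h : Fn n) (hh : Sm h) (v : Fin p → Fn n) (hv : ∀ i, Sm (v i)) (x : Fin m → ℝ) :
    D (Fin.cons h v) x = ∑ b, pd b h (K0 x) * D (Fin.cons (coordFn b) v) x := by
  classical
  set Φ : MultilinearMap ℝ (fun _ : Fin p => Fn n) (Fn m) :=
    D.curryLeft h - ∑ b : Fin n, (fun x' => pd b h (K0 x')) • D.curryLeft (coordFn b) with hΦ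
  have hΦapp : ∀ (w : Fin p → Fn n) (x' : Fin m → ℝ),
      Φ w x' = D (Fin.cons h w) x' - ∑ b, pd b h (K0 x') * D (Fin.cons (coordFn b) w) x' := by
    intro w x'
    rw [hΦ, MultilinearMap.sub_apply, MultilinearMap.sum_apply, Pi.sub_apply,
      Finset.sum_apply]
    simp only [MultilinearMap.smul_apply, Pi.smul_apply', smul_eq_mul,
      MultilinearMap.curryLeft_apply]
  have hΦsymm : ∀ (σ : Equiv.Perm (Fin p)) (w : Fin p → Fn n), Φ (w ∘ ⇑σ) = Φ w := by
    intro σ w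
    funext x'
    rw [hΦapp, hΦapp]
    have h1 : D (Fin.cons h (w ∘ ⇑σ)) = D (Fin.cons h w) := by
      rw [← cons_comp_permCons, hD]
    have h2 : ∀ b : Fin n,
        D (Fin.cons (coordFn b) (w ∘ ⇑σ)) = D (Fin.cons (coordFn b) w) := by
      intro b; rw [← cons_comp_permCons, hD]
    rw [h1]
    congr 1
    refine Finset.sum_congr rfl fun b _ => ?_
    rw [h2]
  have hΦzero : ∀ g : Fn n, Sm g → Φ (fun _ => g) = 0 := by
    intro g hg
    funext x'
    rw [hΦapp]
    rw [hdiag g h hg hh x']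
    simp
  have := polar_zero Φ hΦsymm hΦzero v hv
  have hx := congrFun this x
  rw [hΦapp] at hx
  have : (0 : Fn m) x = 0 := rfl
  rw [this] at hx
  linarith [hx]

/-- Peel an arbitrary slot. -/
lemma peel_slot (D : MultilinearMap ℝ (fun _ : Fin (p + 1) => Fn n) (Fn m))
    (hD : ∀ (σ : Equiv.Perm (Fin (p + 1))) (v : Fin (p + 1) → Fn n), D (v ∘ ⇑σ) = D v)
    (K0 : VFn m n)
    (hdiag : ∀ g h : Fn n, Sm g → Sm h → ∀ x,
      D (Fin.cons h (fun _ => g)) x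
        = ∑ b, pd b h (K0 x) * D (Fin.cons (coordFn b) (fun _ => g)) x)
    (u : Fin (p + 1) → Fn n) (hu : ∀ i, Sm (u i)) (i0 : Fin (p + 1)) (x : Fin m → ℝ) :
    D u x = ∑ b, pd b (u i0) (K0 x) * D (Function.update u i0 (coordFn b)) x := by
  classical
  set sw : Equiv.Perm (Fin (p + 1)) := Equiv.swap 0 i0 with hsw
  set w : Fin (p + 1) → Fn n := u ∘ ⇑sw with hw
  have husw : u = w ∘ ⇑sw := by
    funext i
    simp [hw, hsw, Equiv.swap_apply_self]
  have hw0 : w 0 = u i0 := by simp [hw, hsw]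
  have hwsm : ∀ i, Sm (w i) := fun i => hu _
  have hDu : D u = D w := by
    conv_lhs => rw [husw]
    exact hD sw w
  have hcons : Fin.cons (w 0) (Fin.tail w) = w := Fin.cons_self_tail w
  have htail : ∀ j, Sm (Fin.tail w j) := fun j => hwsm _
  have hpeel := peel D hD K0 hdiag (w 0) (hw0 ▸ hu i0) (Fin.tail w) htail x
  rw [hcons] at hpeel
  rw [hDu, hpeel, hw0]
  refine Finset.sum_congr rfl fun b _ => ?_
  congr 1
  have h1 : Fin.cons (coordFn b) (Fin.tail w) = Function.update w 0 (coordFn b) := by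
    rw [← Fin.update_cons_zero (x := w 0), hcons]
  rw [h1]
  have h2 : Function.update w 0 (coordFn b) = Function.update u i0 (coordFn b) ∘ ⇑sw := by
    rw [hw]
    funext i
    rw [Function.comp_apply]
    rcases eq_or_ne i 0 with rfl | hi
    · rw [Function.update_self]
      have : sw 0 = i0 := by simp [hsw]
      rw [this, Function.update_self]
    · rw [Function.update_of_ne hi]
      have hswine : sw i ≠ i0 := by
        simp only [hsw]
        intro hcon
        apply hi
        have := congrArg (⇑(Equiv.swap (0 : Fin (p+1)) i0)) hcon
        rwa [Equiv.swap_apply_self, Equiv.swap_apply_right] at this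
      rw [Function.update_of_ne hswine, Function.comp_apply]
  rw [h2, hD]

/-- The padding tuple: coordinates in the first `j` slots, `g` in the rest. -/
def padv (q j : ℕ) (a : Fin j → Fin n) (g : Fn n) : Fin q → Fn n :=
  fun i => if h : (i : ℕ) < j then coordFn (a ⟨i, h⟩) else g

/-- `snoc` as an equivalence. -/
def snocEquiv (j : ℕ) : ((Fin j → Fin n) × Fin n) ≃ (Fin (j + 1) → Fin n) where
  toFun q := Fin.snoc q.1 q.2
  invFun a := (Fin.init a, a (Fin.last j))
  left_inv := by
    rintro ⟨a, b⟩
    simp [Fin.init_snoc, Fin.snoc_last]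
  right_inv := by
    intro a
    simp [Fin.snoc_init_self]

lemma expand_diag (D : MultilinearMap ℝ (fun _ : Fin (p + 1) => Fn n) (Fn m))
    (hD : ∀ (σ : Equiv.Perm (Fin (p + 1))) (v : Fin (p + 1) → Fn n), D (v ∘ ⇑σ) = D v)
    (K0 : VFn m n)
    (hdiag : ∀ g h : Fn n, Sm g → Sm h → ∀ x,
      D (Fin.cons h (fun _ => g)) x
        = ∑ b, pd b h (K0 x) * D (Fin.cons (coordFn b) (fun _ => g)) x)
    (g : Fn n) (hg : Sm g) (x : Fin m → ℝ) :
    D (fun _ => g) x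
      = ∑ a : Fin (p + 1) → Fin n,
          D (fun i => coordFn (a i)) x * ∏ i, pd (a i) g (K0 x) := by
  classical
  have key : ∀ j, j ≤ p + 1 →
      D (fun _ => g) x
        = ∑ a : Fin j → Fin n,
            (∏ i, pd (a i) g (K0 x)) * D (padv (p + 1) j a g) x := by
    intro j
    induction j with
    | zero =>
      intro _
      rw [Finset.univ_unique, Finset.sum_singleton]
      have hpad : padv (p + 1) 0 (default : Fin 0 → Fin n) g = fun _ => g := by
        funext i
        simp [padv]
      rw [hpad]
      simp
    | succ j ih =>
      intro hj
      have hj' : j ≤ p + 1 := by omega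
      rw [ih hj']
      have hstep : ∀ a : Fin j → Fin n,
          D (padv (p + 1) j a g) x
            = ∑ b, pd b g (K0 x) * D (padv (p + 1) (j + 1) (Fin.snoc a b) g) x := by
        intro a
        have hjlt : j < p + 1 := by omega
        have hpadsm : ∀ i, Sm (padv (p + 1) j a g i) := by
          intro i
          by_cases h : (i : ℕ) < j
          · simp only [padv, dif_pos h]; exact coordFn_smooth _
          · simp only [padv, dif_neg h]; exact hg
        have hval : padv (p + 1) j a g ⟨j, hjlt⟩ = g := by
          simp [padv]
        have := peel_slot D hD K0 hdiag (padv (p + 1) j a g) hpadsm ⟨j, hjlt⟩ x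
        rw [hval] at this
        rw [this]
        refine Finset.sum_congr rfl fun b _ => ?_
        have hupd : Function.update (padv (p + 1) j a g) ⟨j, hjlt⟩ (coordFn b)
            = padv (p + 1) (j + 1) (Fin.snoc a b) g := by
          funext i
          rcases lt_trichotomy (i : ℕ) j with hlt | heq | hgt
          · have hine : i ≠ ⟨j, hjlt⟩ := by
              intro hcon; rw [hcon] at hlt; simp at hlt
            rw [Function.update_of_ne hine]
            have hlt' : (i : ℕ) < j + 1 := by omega
            simp only [padv, dif_pos hlt, dif_pos hlt']
            have hc : (⟨(i : ℕ), hlt'⟩ : Fin (j + 1)) = Fin.castSucc ⟨(i : ℕ), hlt⟩ := rfl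
            rw [hc, Fin.snoc_castSucc]
          · have hieq : i = ⟨j, hjlt⟩ := Fin.ext heq
            rw [hieq, Function.update_self]
            have hlt' : j < j + 1 := by omega
            simp only [padv, dif_pos hlt']
            have hc : (⟨j, hlt'⟩ : Fin (j + 1)) = Fin.last j := rfl
            rw [hc, Fin.snoc_last]
          · have hine : i ≠ ⟨j, hjlt⟩ := by
              intro hcon; rw [hcon] at hgt; simp at hgt
            rw [Function.update_of_ne hine]
            have h1 : ¬ (i : ℕ) < j := by omega
            have h2 : ¬ (i : ℕ) < j + 1 := by omega
            simp only [padv, dif_neg h1, dif_neg h2]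
        rw [hupd]
      rw [Finset.sum_congr rfl fun a _ => by rw [hstep a]]
      rw [← Equiv.sum_comp (snocEquiv (n := n) j)
        (fun q : Fin (j + 1) → Fin n => (∏ i, pd (q i) g (K0 x))
            * D (padv (p + 1) (j + 1) q g) x)]
      rw [Fintype.sum_prod_type]
      refine Finset.sum_congr rfl fun a _ => ?_
      rw [Finset.mul_sum]
      refine Finset.sum_congr rfl fun b _ => ?_
      simp only [snocEquiv, Equiv.coe_fn_mk]
      have hprod : (∏ i : Fin (j + 1), pd ((Fin.snoc a b : Fin (j + 1) → Fin n) i) g (K0 x))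
          = (∏ i : Fin j, pd (a i) g (K0 x)) * pd b g (K0 x) := by
        rw [Fin.prod_univ_castSucc]
        congr 1
        · refine Finset.prod_congr rfl fun i _ => ?_
          rw [Fin.snoc_castSucc]
        · rw [Fin.snoc_last]
      rw [hprod]
      ring
  have hfin := key (p + 1) le_rfl
  rw [hfin]
  refine Finset.sum_congr rfl fun a _ => ?_
  have hpad : padv (p + 1) (p + 1) a g = fun i => coordFn (a i) := by
    funext i
    have : (i : ℕ) < p + 1 := i.isLt
    simp only [padv, dif_pos this]
  rw [hpad, mul_comm]

end Peel

/-- Let `L` and `L̃` be two formal functionals which are non-linear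
homomorphisms (with formal maps `K`, `K̃`) and which coincide up to order `k-1`, `k ≥ 2`.
Then they have the same support map `K₀`, and their order-`k` components differ by
`T_k(∂g)`: `L̃_k(g)(x) − L_k(g)(x) = Σ_{a⃗} T^{a_1…a_k}(x) ∂_{a_1}g(K₀(x))⋯∂_{a_k}g(K₀(x))`,
with `T^{a_1…a_k}(x) = B̃_k(y^{a_1},…,y^{a_k})(x) − B_k(y^{a_1},…,y^{a_k})(x)`. -/
theorem difference_of_nonlinear_homs {n m : ℕ} (k : ℕ) (hk : 2 ≤ k)
    (L Lt : FormalFunctional n m) (K Kt : FormalMap n m)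
    (hL : IsNonlinearHomWith L K) (hLt : IsNonlinearHomWith Lt Kt)
    (hcoin : ∀ j ≤ k - 1, ∀ g : Fn n, Sm g → L.ord j g = Lt.ord j g) :
    K.supp = Kt.supp ∧
    ∀ g : Fn n, Sm g → ∀ x : Fin m → ℝ,
      Lt.ord k g x - L.ord k g x =
        ∑ a : Fin k → Fin n,
          (Lt.B k (fun i => coordFn (a i)) x - L.B k (fun i => coordFn (a i)) x) *
            ∏ i, pd (a i) g (K.supp x) := by
  classical
  obtain ⟨p, rfl⟩ : ∃ p, k = p + 1 := ⟨k - 1, by omega⟩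
  have hp : 1 ≤ p := by omega
  have hord0 : ∀ (Q : FormalMap n m) (g : Fn n), Q.ord 0 g = Q.supp := by
    intro Q g
    unfold FormalMap.ord FormalMap.supp
    congr 1
    funext i
    exact i.elim0
  have hzero : Sm (0 : Fn n) := contDiff_const
  have hord1 : ∀ (L' : FormalFunctional n m) (K' : FormalMap n m),
      IsNonlinearHomWith L' K' → ∀ h : Fn n, Sm h → ∀ x,
      L'.B 1 (fun _ => h) x = h (K'.supp x) := by
    intro L' K' hLK h hh x
    have hthis := hLK 0 h hzero hh 0
    have hcons : (Fin.cons h (fun _ => (0 : Fn n)) : Fin 1 → Fn n) = fun _ => h := by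
      funext i
      have hi : i = 0 := Fin.ext (by have := i.isLt; omega)
      rw [hi, Fin.cons_zero]
    rw [hcons] at hthis
    simp only [Nat.cast_zero, zero_add, one_smul] at hthis
    have hx := congrFun hthis x
    rw [taylorComp_zero] at hx
    simp only [hord0] at hx
    exact hx
  have hsupp : K.supp = Kt.supp := by
    funext x a
    have h1 := hord1 L K hL (coordFn a) (coordFn_smooth a) x
    have h2 := hord1 Lt Kt hLt (coordFn a) (coordFn_smooth a) x
    have h3 : L.ord 1 (coordFn a) = Lt.ord 1 (coordFn a) :=
      hcoin 1 (by omega) _ (coordFn_smooth a)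
    have h4 : L.B 1 (fun _ => coordFn a) x = Lt.B 1 (fun _ => coordFn a) x := congrFun h3 x
    rw [h1, h2] at h4
    exact h4
  have hBagree : ∀ j, j ≤ p → ∀ v : Fin j → Fn n, (∀ i, Sm (v i)) → L.B j v = Lt.B j v := by
    intro j hj v hv
    refine polar_eq (L.B j) (Lt.B j) (L.symm j) (Lt.symm j) ?_ v hv
    intro gg hgg
    exact hcoin j (by omega) gg hgg
  have hKagree : ∀ r, 1 ≤ r → r < p → ∀ g : Fn n, Sm g → K.ord r g = Kt.ord r g := by
    intro r h1r hrp g hg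
    funext x a
    have hLr := hL g (coordFn a) hg (coordFn_smooth a) r
    have hLtr := hLt g (coordFn a) hg (coordFn_smooth a) r
    have hsm : ∀ i, Sm ((Fin.cons (coordFn a) (fun _ => g) : Fin (r + 1) → Fn n) i) :=
      smooth_cons (coordFn_smooth a) (fun _ => hg)
    have hBeq := hBagree (r + 1) (by omega) _ hsm
    have e1 := congrFun hLr x
    have e2 := congrFun hLtr x
    rw [taylorComp_coordFn _ _ h1r] at e1 e2
    rw [hBeq] at e1
    exact e1.symm.trans e2
  set D : MultilinearMap ℝ (fun _ : Fin (p + 1) => Fn n) (Fn m)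
    := Lt.B (p + 1) - L.B (p + 1) with hD
  have hDsymm : ∀ (σ : Equiv.Perm (Fin (p + 1))) (v : Fin (p + 1) → Fn n),
      D (v ∘ ⇑σ) = D v := by
    intro σ v
    rw [hD]
    simp only [MultilinearMap.sub_apply]
    rw [Lt.symm, L.symm]
  have hdiag : ∀ g h : Fn n, Sm g → Sm h → ∀ x,
      D (Fin.cons h (fun _ => g)) x
        = ∑ b, pd b h (K.supp x) * D (Fin.cons (coordFn b) (fun _ => g)) x := by
    intro g h hg hh x
    have hsub : ∀ h' : Fn n, Sm h' →
        ((p : ℝ) + 1) * D (Fin.cons h' (fun _ => g)) x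
          = fderiv ℝ h' (K.supp x) (fun a => Kt.ord p g x a - K.ord p g x a) := by
      intro h' hh'
      have e1 := congrFun (hL g h' hg hh' p) x
      have e2 := congrFun (hLt g h' hg hh' p) x
      simp only [Pi.smul_apply, smul_eq_mul] at e1 e2
      have h00 : (fun r => K.ord r g) 0 = (fun r => Kt.ord r g) 0 := by
        simp only [hord0, hsupp]
      have hlow : ∀ r, 1 ≤ r → r < p →
          (fun r' => K.ord r' g) r = (fun r' => Kt.ord r' g) r := by
        intro r hr1 hr2
        exact hKagree r hr1 hr2 g hg
      have hts := taylorComp_sub h' (fun r => K.ord r g) (fun r => Kt.ord r g)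
        hp h00 hlow x
      simp only [hord0] at hts
      rw [hD]
      simp only [MultilinearMap.sub_apply, Pi.sub_apply]
      rw [mul_sub, e1, e2]
      exact hts
    have hcoord : ∀ b, Kt.ord p g x b - K.ord p g x b
        = ((p : ℝ) + 1) * D (Fin.cons (coordFn b) (fun _ => g)) x := by
      intro b
      have hb := hsub (coordFn b) (coordFn_smooth b)
      rw [fderiv_coordFn_apply] at hb
      exact hb.symm
    have hcancel : ((p : ℝ) + 1) ≠ 0 := by positivity
    apply mul_left_cancel₀ hcancel
    rw [hsub h hh, fderiv_eval_eq_sum_pd, Finset.mul_sum]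
    refine Finset.sum_congr rfl fun b _ => ?_
    rw [hcoord b]
    ring
  refine ⟨hsupp, ?_⟩
  intro g hg x
  have hexp := expand_diag D hDsymm K.supp hdiag g hg x
  rw [hD] at hexp
  simp only [MultilinearMap.sub_apply, Pi.sub_apply] at hexp
  have hL1 : Lt.ord (p + 1) g x - L.ord (p + 1) g x
      = Lt.B (p + 1) (fun _ => g) x - L.B (p + 1) (fun _ => g) x := rfl
  rw [hL1, hexp]


end ThickMorphism
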